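/- Let W_F be the group on generators r0, r0', r1, r1' with relations r_i^2 = 1 for each generator and r0 r0' r1 r1' = 1, and let ℓ be word length with respect to these four generators. Then for every positive integer n, the number of elements w ∈ W_F with ℓ(w) = n equals 4n. -/

import Mathlib

/-- The minimal length of an expression of `w` as a product of elements of the
generating set `S`. -/
noncomputable def wordLength {G : Type*} [Group G] (S : Set G) (w : G) : ℕ :=
  sInf {n | ∃ l : List G, (∀ x ∈ l, x ∈ S) ∧ l.length = n ∧ l.prod = w}

/-- Relations of the elliptic Weyl group of type `A₁⁽¹'¹⁾`:
each generator squares to `1` and `r₀ r₀' r₁ r₁' = 1`. -/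
def ellRels4 : Set (FreeGroup (Fin 4)) :=
  {x | ∃ i, x = (FreeGroup.of i) ^ 2} ∪
  {FreeGroup.of 0 * FreeGroup.of 1 * FreeGroup.of 2 * FreeGroup.of 3}

/-!
`W_F` is the wallpaper group `p2 = ℤ² ⋊ {±1}` of maps `v ↦ (x, y) ± v`, the four generators
being the half-turns about `0`, `e₁/2`, `(e₁ + e₂)/2` and `e₂/2`: the product of the half-turns
about the vertices of a parallelogram is trivial, and these relations already force the
translations `r₀' r₀` and `r₁ r₀'` to commute and to be inverted by `r₀`.

Word length on `p2` is `length g = max |2x - ε| |2y - ε|`, where `ε ∈ {0, 1}` records whether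
`g` is a half-turn; that is, twice the sup-distance by which `g` moves the point `(¼, ¼)`. Each
generator changes it by at most one, and for `g ≠ 1` a generator lowering it is chosen by the
signs of `x` and `y`. Every `g` of length `n` has `ε ≡ n (mod 2)`, and `(x, y) + ⌊n/2⌋ (1, 1)`
runs through the boundary of the square `[0, n]²`, which has `(n + 1)² - (n - 1)² = 4n` lattice
points.
-/

section WordLength

variable {G : Type*} [Group G] {S : Set G}

lemma le_length_of_list_prod {f : G → ℕ} (h_one : f 1 = 0)
    (h_mul : ∀ s ∈ S, ∀ g, f (s * g) ≤ f g + 1) {l : List G} (hl : ∀ x ∈ l, x ∈ S) :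
    f l.prod ≤ l.length := by
  induction l with
  | nil => simp [h_one]
  | cons s l ih =>
    rw [List.prod_cons, List.length_cons]
    have := h_mul s (hl s List.mem_cons_self) l.prod
    have := ih fun x hx => hl x (List.mem_cons_of_mem s hx)
    omega

lemma exists_list_prod_eq_of_descent {f : G → ℕ}
    (h_desc : ∀ g, g ≠ 1 → ∃ s ∈ S, ∃ h, s * h = g ∧ f h < f g) (g : G) :
    ∃ l : List G, (∀ x ∈ l, x ∈ S) ∧ l.length ≤ f g ∧ l.prod = g := by
  induction hg : f g using Nat.strong_induction_on generalizing g with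
  | _ n ih =>
    by_cases hg1 : g = 1
    · exact ⟨[], by simp, by simp, by simp [hg1]⟩
    obtain ⟨s, hs, h, rfl, hlt⟩ := h_desc g hg1
    obtain ⟨l, hlS, hlen, hprod⟩ := ih (f h) (hg ▸ hlt) h rfl
    refine ⟨s :: l, by simpa [hs] using hlS, ?_, by rw [List.prod_cons, hprod]⟩
    simp only [List.length_cons]
    omega

lemma closure_eq_top_of_descent {f : G → ℕ}
    (h_desc : ∀ g, g ≠ 1 → ∃ s ∈ S, ∃ h, s * h = g ∧ f h < f g) : Subgroup.closure S = ⊤ := by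
  refine eq_top_iff.mpr fun g _ => ?_
  obtain ⟨l, hlS, -, rfl⟩ := exists_list_prod_eq_of_descent h_desc g
  exact Subgroup.list_prod_mem _ fun x hx => Subgroup.subset_closure (hlS x hx)

theorem wordLength_eq_of_descent {f : G → ℕ} (h_one : f 1 = 0)
    (h_mul : ∀ s ∈ S, ∀ g, f (s * g) ≤ f g + 1)
    (h_desc : ∀ g, g ≠ 1 → ∃ s ∈ S, ∃ h, s * h = g ∧ f h < f g) (g : G) :
    wordLength S g = f g := by
  obtain ⟨l, hlS, hlen, hprod⟩ := exists_list_prod_eq_of_descent h_desc g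
  have hmem : l.length ∈ {n | ∃ l : List G, (∀ x ∈ l, x ∈ S) ∧ l.length = n ∧ l.prod = g} :=
    ⟨l, hlS, rfl, hprod⟩
  refine le_antisymm ((Nat.sInf_le hmem).trans hlen) ?_
  obtain ⟨l', hl'S, hlen', rfl⟩ := Nat.sInf_mem ⟨_, hmem⟩
  rw [wordLength, ← hlen']
  exact le_length_of_list_prod h_one h_mul hl'S

lemma exists_list_prod_map {H : Type*} [Group H] (f : G →* H) {n : ℕ} {w : G}
    (h : ∃ l : List G, (∀ x ∈ l, x ∈ S) ∧ l.length = n ∧ l.prod = w) :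
    ∃ l : List H, (∀ x ∈ l, x ∈ f '' S) ∧ l.length = n ∧ l.prod = f w := by
  obtain ⟨l, hlS, rfl, rfl⟩ := h
  exact ⟨l.map f, by simpa using fun x hx => ⟨x, hlS x hx, rfl⟩, by simp, by simp [map_list_prod]⟩

lemma wordLength_map {H : Type*} [Group H] (e : G ≃* H) (S : Set G) (w : G) :
    wordLength (e '' S) (e w) = wordLength S w := by
  unfold wordLength
  congr 1
  ext n
  refine ⟨fun h => ?_, exists_list_prod_map e.toMonoidHom⟩
  simpa [Set.image_image] using exists_list_prod_map e.symm.toMonoidHom h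

end WordLength

@[ext] structure WallpaperP2 where
  x : ℤ
  y : ℤ
  rot : Bool
deriving DecidableEq

namespace WallpaperP2

def sign (b : Bool) : ℤ := bif b then -1 else 1

@[simp] lemma sign_false : sign false = 1 := rfl
@[simp] lemma sign_true : sign true = -1 := rfl

lemma sign_xor (a b : Bool) : sign (xor a b) = sign a * sign b := by
  cases a <;> cases b <;> rfl

instance : Mul WallpaperP2 :=
  ⟨fun g h => ⟨g.x + sign g.rot * h.x, g.y + sign g.rot * h.y, xor g.rot h.rot⟩⟩
instance : One WallpaperP2 := ⟨⟨0, 0, false⟩⟩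
instance : Inv WallpaperP2 := ⟨fun g => ⟨-(sign g.rot * g.x), -(sign g.rot * g.y), g.rot⟩⟩

@[simp] lemma mul_x (g h : WallpaperP2) : (g * h).x = g.x + sign g.rot * h.x := rfl
@[simp] lemma mul_y (g h : WallpaperP2) : (g * h).y = g.y + sign g.rot * h.y := rfl
@[simp] lemma mul_rot (g h : WallpaperP2) : (g * h).rot = xor g.rot h.rot := rfl
@[simp] lemma one_x : (1 : WallpaperP2).x = 0 := rfl
@[simp] lemma one_y : (1 : WallpaperP2).y = 0 := rfl
@[simp] lemma one_rot : (1 : WallpaperP2).rot = false := rfl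
@[simp] lemma inv_x (g : WallpaperP2) : g⁻¹.x = -(sign g.rot * g.x) := rfl
@[simp] lemma inv_y (g : WallpaperP2) : g⁻¹.y = -(sign g.rot * g.y) := rfl
@[simp] lemma inv_rot (g : WallpaperP2) : g⁻¹.rot = g.rot := rfl

instance : Group WallpaperP2 where
  mul_assoc a b c := by
    ext <;> simp only [mul_x, mul_y, mul_rot, sign_xor, Bool.xor_assoc] <;> ring
  one_mul a := by ext <;> simp
  mul_one a := by ext <;> simp
  inv_mul_cancel a := by ext <;> cases a.rot <;> simp

def gen : Fin 4 → WallpaperP2 := ![⟨0, 0, true⟩, ⟨1, 0, true⟩, ⟨1, 1, true⟩, ⟨0, 1, true⟩]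

lemma gen_mul_self (i : Fin 4) : gen i * gen i = 1 := by
  fin_cases i <;> decide

lemma gen_mul_gen_mul_gen_mul_gen : gen 0 * gen 1 * gen 2 * gen 3 = 1 := by
  decide

def length (g : WallpaperP2) : ℕ :=
  max (2 * g.x - g.rot.toNat).natAbs (2 * g.y - g.rot.toNat).natAbs

@[simp] lemma length_one : length 1 = 0 := rfl

lemma length_gen_mul_le (i : Fin 4) (g : WallpaperP2) : length (gen i * g) ≤ length g + 1 := by
  obtain ⟨x, y, _ | _⟩ := g <;> fin_cases i <;> simp [length, gen] <;> omega

lemma exists_gen_mul_eq_length_lt {g : WallpaperP2} (hg : g ≠ 1) :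
    ∃ s ∈ Set.range gen, ∃ h, s * h = g ∧ length h < length g := by
  suffices ∃ i, length (gen i * g) < length g by
    obtain ⟨i, hi⟩ := this
    exact ⟨gen i, ⟨i, rfl⟩, gen i * g, by rw [← mul_assoc, gen_mul_self, one_mul], hi⟩
  obtain ⟨x, y, r⟩ := g
  have hg' : ¬(x = 0 ∧ y = 0 ∧ r = false) := by
    rintro ⟨rfl, rfl, rfl⟩
    exact hg rfl
  by_cases hx : 1 ≤ x <;> by_cases hy : 1 ≤ y
  · exact ⟨2, by cases r <;> simp_all [length, gen] <;> omega⟩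
  · exact ⟨1, by cases r <;> simp_all [length, gen] <;> omega⟩
  · exact ⟨3, by cases r <;> simp_all [length, gen] <;> omega⟩
  · exact ⟨0, by cases r <;> simp_all [length, gen] <;> omega⟩

theorem wordLength_range_gen (g : WallpaperP2) : wordLength (Set.range gen) g = length g :=
  wordLength_eq_of_descent length_one (by rintro _ ⟨i, rfl⟩ g; exact length_gen_mul_le i g)
    (fun _ => exists_gen_mul_eq_length_lt) g

lemma closure_range_gen : Subgroup.closure (Set.range gen) = ⊤ :=
  closure_eq_top_of_descent fun _ => exists_gen_mul_eq_length_lt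

noncomputable def frame (n : ℕ) : Finset (ℤ × ℤ) :=
  Finset.Icc 0 (n : ℤ) ×ˢ Finset.Icc 0 (n : ℤ) \
    Finset.Icc 1 (n - 1 : ℤ) ×ˢ Finset.Icc 1 (n - 1 : ℤ)

lemma card_frame {n : ℕ} (hn : 0 < n) : (frame n).card = 4 * n := by
  rw [frame, Finset.card_sdiff_of_subset, Finset.card_product, Finset.card_product,
    Int.card_Icc, Int.card_Icc]
  · obtain ⟨k, rfl⟩ : ∃ k, n = k + 1 := ⟨n - 1, by omega⟩
    have h₁ : ((k + 1 : ℕ) + 1 - 0 : ℤ).toNat = k + 2 := by omega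
    have h₂ : ((k + 1 : ℕ) - 1 + 1 - 1 : ℤ).toNat = k := by omega
    rw [h₁, h₂]
    ring_nf
    omega
  · exact Finset.product_subset_product (Finset.Icc_subset_Icc (by omega) (by omega))
      (Finset.Icc_subset_Icc (by omega) (by omega))

def ofFrame (n : ℕ) (p : ℤ × ℤ) : WallpaperP2 := ⟨p.1 - n / 2, p.2 - n / 2, n % 2 = 1⟩

lemma ofFrame_injective (n : ℕ) : Function.Injective (ofFrame n) := by
  intro p q h
  simp only [ofFrame, WallpaperP2.mk.injEq] at h
  ext <;> omega

lemma setOf_length_eq (n : ℕ) : {g | length g = n} = ofFrame n '' frame n := by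
  ext ⟨x, y, r⟩
  simp only [Set.mem_ofPred_eq, Set.mem_image, Finset.mem_coe, frame, Finset.mem_sdiff,
    Finset.mem_product, Finset.mem_Icc, ofFrame, WallpaperP2.mk.injEq, Prod.exists]
  constructor
  · intro h
    refine ⟨x + n / 2, y + n / 2, ?_, by omega, by omega, ?_⟩ <;>
      cases r <;> simp [length] at h ⊢ <;> omega
  · rintro ⟨a, b, hab, rfl, rfl, rfl⟩
    by_cases hn : n % 2 = 1 <;> simp [length, hn] <;> omega

lemma ncard_setOf_length_eq {n : ℕ} (hn : 0 < n) : {g | length g = n}.ncard = 4 * n := by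
  rw [setOf_length_eq, Set.ncard_image_of_injective _ (ofFrame_injective n),
    Set.ncard_coe_finset, card_frame hn]

section Lift

variable {G : Type*} [Group G]

lemma cond_mul_cond {a : G} (ha : a * a = 1) (r r' : Bool) :
    (bif r then a else 1) * (bif r' then a else 1) = bif xor r r' then a else 1 := by
  cases r <;> cases r' <;> simp [ha]

lemma cond_mul_zpow_mul_zpow {a t₁ t₂ : G} (h₁ : SemiconjBy a t₁ t₁⁻¹)
    (h₂ : SemiconjBy a t₂ t₂⁻¹) (r : Bool) (x y : ℤ) :
    (bif r then a else 1) * (t₁ ^ x * t₂ ^ y) =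
      t₁ ^ (sign r * x) * t₂ ^ (sign r * y) * bif r then a else 1 := by
  cases r
  · simp
  · simp only [cond_true, sign_true, neg_one_mul, zpow_neg, ← inv_zpow]
    rw [← mul_assoc, (h₁.zpow_right x).eq, mul_assoc, (h₂.zpow_right y).eq, mul_assoc]

lemma zpow_mul_zpow_mul_zpow_mul_zpow {t₁ t₂ : G} (h : Commute t₁ t₂) (x y x' y' : ℤ) :
    t₁ ^ x * t₂ ^ y * (t₁ ^ x' * t₂ ^ y') = t₁ ^ (x + x') * t₂ ^ (y + y') := by
  rw [zpow_add, zpow_add, mul_assoc, ← mul_assoc (t₂ ^ y), (h.zpow_zpow x' y).eq.symm]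
  simp only [mul_assoc]

def liftOfSemiconj {a t₁ t₂ : G} (ha : a * a = 1) (h₁₂ : Commute t₁ t₂)
    (h₁ : SemiconjBy a t₁ t₁⁻¹) (h₂ : SemiconjBy a t₂ t₂⁻¹) : WallpaperP2 →* G where
  toFun g := t₁ ^ g.x * t₂ ^ g.y * bif g.rot then a else 1
  map_one' := by simp
  map_mul' g h :=
    calc t₁ ^ (g.x + sign g.rot * h.x) * t₂ ^ (g.y + sign g.rot * h.y) *
          (bif xor g.rot h.rot then a else 1)
        = t₁ ^ g.x * t₂ ^ g.y * (t₁ ^ (sign g.rot * h.x) * t₂ ^ (sign g.rot * h.y)) *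
            ((bif g.rot then a else 1) * (bif h.rot then a else 1)) := by
          rw [zpow_mul_zpow_mul_zpow_mul_zpow h₁₂, cond_mul_cond ha]
      _ = t₁ ^ g.x * t₂ ^ g.y * ((bif g.rot then a else 1) * (t₁ ^ h.x * t₂ ^ h.y)) *
            (bif h.rot then a else 1) := by
          rw [cond_mul_zpow_mul_zpow h₁ h₂]
          simp only [mul_assoc]
      _ = t₁ ^ g.x * t₂ ^ g.y * (bif g.rot then a else 1) *
            (t₁ ^ h.x * t₂ ^ h.y * (bif h.rot then a else 1)) := by
          simp only [mul_assoc]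

variable {v : Fin 4 → G}

lemma apply_three_eq_of_rels (hv : ∀ i, v i * v i = 1) (hprod : v 0 * v 1 * v 2 * v 3 = 1) :
    v 3 = v 2 * v 1 * v 0 := by
  have hinv (i : Fin 4) : (v i)⁻¹ = v i := inv_eq_of_mul_eq_one_right (hv i)
  simpa [mul_assoc, hinv] using eq_inv_of_mul_eq_one_right hprod

lemma semiconjBy_of_rels (hv : ∀ i, v i * v i = 1) (hprod : v 0 * v 1 * v 2 * v 3 = 1) :
    SemiconjBy (v 0) (v 2 * v 1) (v 1 * v 2) := by
  have hinv (i : Fin 4) : (v i)⁻¹ = v i := inv_eq_of_mul_eq_one_right (hv i)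
  have hsq : v 0 * v 2 * v 1 * (v 0 * v 2 * v 1) = 1 :=
    calc _ = v 0 * (v 3 * v 3) * v 0 := by
          simp only [apply_three_eq_of_rels hv hprod, mul_assoc, hv 0, mul_one]
      _ = 1 := by rw [hv 3, mul_one, hv 0]
  simpa [SemiconjBy, mul_assoc, hinv] using eq_inv_of_mul_eq_one_left hsq

def lift (v : Fin 4 → G) (hv : ∀ i, v i * v i = 1) (hprod : v 0 * v 1 * v 2 * v 3 = 1) :
    WallpaperP2 →* G :=
  have hinv (i : Fin 4) : (v i)⁻¹ = v i := inv_eq_of_mul_eq_one_right (hv i)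
  have hcomm : v 0 * (v 2 * v 1) = v 1 * (v 2 * v 0) := by
    simpa only [mul_assoc] using (semiconjBy_of_rels hv hprod).eq
  liftOfSemiconj (t₁ := v 1 * v 0) (t₂ := v 2 * v 1) (hv 0)
    (by
      show v 1 * v 0 * (v 2 * v 1) = v 2 * v 1 * (v 1 * v 0)
      simp only [mul_assoc, hcomm, ← mul_assoc (v 1) (v 1), hv 1, one_mul])
    (by simp [SemiconjBy, hinv, mul_assoc])
    (by simpa [hinv] using semiconjBy_of_rels hv hprod)

lemma lift_gen (hv : ∀ i, v i * v i = 1) (hprod : v 0 * v 1 * v 2 * v 3 = 1) (i : Fin 4) :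
    lift v hv hprod (gen i) = v i := by
  have hv' (i : Fin 4) (x : G) : v i * (v i * x) = x := by rw [← mul_assoc, hv, one_mul]
  fin_cases i <;> simp [lift, liftOfSemiconj, gen, mul_assoc, hv]
  · rw [← mul_assoc (v 2), ← mul_assoc (v 0), (semiconjBy_of_rels hv hprod).eq]
    simp only [mul_assoc, hv', hv 0, mul_one]
  · simp only [apply_three_eq_of_rels hv hprod, mul_assoc]

end Lift

lemma freeGroup_lift_gen_eq_one : ∀ r ∈ ellRels4, FreeGroup.lift gen r = 1 := by
  rintro r (⟨i, rfl⟩ | rfl)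
  · simp [pow_two, gen_mul_self]
  · simpa using gen_mul_gen_mul_gen_mul_gen

lemma of_mul_self (i : Fin 4) :
    (PresentedGroup.of i : PresentedGroup ellRels4) * PresentedGroup.of i = 1 := by
  have := PresentedGroup.one_of_mem (Set.mem_union_left _ ⟨i, rfl⟩ :
    FreeGroup.of i ^ 2 ∈ ellRels4)
  rwa [map_pow, pow_two] at this

lemma of_mul_of_mul_of_mul_of :
    (PresentedGroup.of 0 * PresentedGroup.of 1 * PresentedGroup.of 2 * PresentedGroup.of 3 :
      PresentedGroup ellRels4) = 1 := by
  have := PresentedGroup.one_of_mem (Set.mem_union_right _ rfl :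
    FreeGroup.of 0 * FreeGroup.of 1 * FreeGroup.of 2 * FreeGroup.of 3 ∈ ellRels4)
  rwa [map_mul, map_mul, map_mul] at this

def presentedGroupEquiv : PresentedGroup ellRels4 ≃* WallpaperP2 :=
  MonoidHom.toMulEquiv (PresentedGroup.toGroup freeGroup_lift_gen_eq_one)
    (lift PresentedGroup.of of_mul_self of_mul_of_mul_of_mul_of)
    (PresentedGroup.ext fun i => by simp [lift_gen])
    (MonoidHom.eq_of_eqOn_dense closure_range_gen (by rintro _ ⟨i, rfl⟩; simp [lift_gen]))

lemma presentedGroupEquiv_of (i : Fin 4) : presentedGroupEquiv (PresentedGroup.of i) = gen i :=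
  PresentedGroup.toGroup.of freeGroup_lift_gen_eq_one

lemma wordLength_presentedGroup (w : PresentedGroup ellRels4) :
    wordLength (Set.range PresentedGroup.of) w = length (presentedGroupEquiv w) := by
  have hS : ⇑presentedGroupEquiv ∘ PresentedGroup.of = gen := funext presentedGroupEquiv_of
  rw [← wordLength_map presentedGroupEquiv, ← Set.range_comp, hS, wordLength_range_gen]

end WallpaperP2

theorem stmt14 :
    ∀ n : ℕ, 0 < n →
      {w : PresentedGroup ellRels4 |
        wordLength (Set.range (PresentedGroup.of (rels := ellRels4))) w = n}.ncard
        = 4 * n := by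
  intro n hn
  have hsphere : {w : PresentedGroup ellRels4 |
      wordLength (Set.range (PresentedGroup.of (rels := ellRels4))) w = n} =
      WallpaperP2.presentedGroupEquiv ⁻¹' {g | g.length = n} := by
    ext w
    simp [WallpaperP2.wordLength_presentedGroup]
  rw [hsphere, Set.ncard_preimage_of_injective_subset_range
    WallpaperP2.presentedGroupEquiv.injective (by simp), WallpaperP2.ncard_setOf_length_eq hn]
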